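/- arXiv:2410.22146 — 8 statements merged into one kernel-verified Lean document; each statement's English description precedes it below -/
import Mathlib

section
/- Let e denote Euler's number and set σ₁ := (e−1)/(e+1), σ₂ := (e+1)/(e−1). Suppose σ ∈ ℝ and Φ : ℝ → ℝ is twice differentiable with Φ''(x) = Φ(x) for all x ∈ [0,1], −Φ'(0) = σ·Φ(0), Φ'(1) = σ·Φ(1), and Φ is not identically zero on [0,1]. Then σ = σ₁ or σ = σ₂. -/
/-!
On a solution of `Φ'' = Φ` the combinations `Φ - Φ'` and `Φ + Φ'` solve first-order equations,
so `Φ - Φ'` decays like `e^{-x}` and `Φ + Φ'` grows like `e^{x}`. Feeding both boundary conditions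
into these two relations between `x = 0` and `x = 1` gives `(1 + σ)² Φ(0) = (1 - σ)² e² Φ(0)`,
and `Φ(0) ≠ 0` because `Φ(0) = Φ'(0) = 0` would force `Φ ≡ 0` on `[0, 1]`.
-/

open Real Set

theorem eq_mul_exp_of_hasDerivAt_eq_mul {u : ℝ → ℝ} {c a b : ℝ}
    (hcont : ContinuousOn u (Icc a b)) (hderiv : ∀ x ∈ Ico a b, HasDerivAt u (c * u x) x) :
    ∀ y ∈ Icc a b, u y = u a * exp (c * (y - a)) := by
  have hconst : ∀ y ∈ Icc a b, u y * exp (-(c * (y - a))) = u a * exp (-(c * (a - a))) := by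
    refine constant_of_has_deriv_right_zero
      (hcont.mul (by fun_prop)) fun x hx => ?_
    have hexp : HasDerivAt (fun y => exp (-(c * (y - a)))) (exp (-(c * (x - a))) * -(c * 1)) x :=
      (((hasDerivAt_id x).sub_const a).const_mul c).neg.exp
    exact (((hderiv x hx).mul hexp).congr_deriv (by ring)).hasDerivWithinAt
  intro y hy
  have h := hconst y hy
  rw [sub_self, mul_zero, neg_zero, exp_zero, mul_one] at h
  rw [← h, mul_assoc, ← exp_add, neg_add_cancel, exp_zero, mul_one]

section SecondOrder

variable {Φ : ℝ → ℝ} {a b : ℝ}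

theorem sub_deriv_eq_mul_exp_of_deriv_deriv_eq (hΦ : Differentiable ℝ Φ)
    (hΦ' : Differentiable ℝ (deriv Φ)) (hODE : ∀ x ∈ Icc a b, deriv (deriv Φ) x = Φ x) :
    ∀ y ∈ Icc a b, Φ y - deriv Φ y = (Φ a - deriv Φ a) * exp (a - y) := by
  have hderiv : ∀ x ∈ Ico a b, HasDerivAt (Φ - deriv Φ) (-1 * (Φ - deriv Φ) x) x :=
    fun x hx => ((hΦ x).hasDerivAt.sub (hΦ' x).hasDerivAt).congr_deriv <| by
      rw [hODE x (Ico_subset_Icc_self hx), Pi.sub_apply]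
      ring
  intro y hy
  have h := eq_mul_exp_of_hasDerivAt_eq_mul (hΦ.sub hΦ').continuous.continuousOn hderiv y hy
  rwa [neg_one_mul, neg_sub] at h

theorem add_deriv_eq_mul_exp_of_deriv_deriv_eq (hΦ : Differentiable ℝ Φ)
    (hΦ' : Differentiable ℝ (deriv Φ)) (hODE : ∀ x ∈ Icc a b, deriv (deriv Φ) x = Φ x) :
    ∀ y ∈ Icc a b, Φ y + deriv Φ y = (Φ a + deriv Φ a) * exp (y - a) := by
  have hderiv : ∀ x ∈ Ico a b, HasDerivAt (Φ + deriv Φ) (1 * (Φ + deriv Φ) x) x :=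
    fun x hx => ((hΦ x).hasDerivAt.add (hΦ' x).hasDerivAt).congr_deriv <| by
      rw [hODE x (Ico_subset_Icc_self hx), Pi.add_apply]
      ring
  intro y hy
  have h := eq_mul_exp_of_hasDerivAt_eq_mul (hΦ.add hΦ').continuous.continuousOn hderiv y hy
  rwa [one_mul] at h

theorem eqOn_zero_of_deriv_deriv_eq (hΦ : Differentiable ℝ Φ)
    (hΦ' : Differentiable ℝ (deriv Φ)) (hODE : ∀ x ∈ Icc a b, deriv (deriv Φ) x = Φ x)
    (h₀ : Φ a = 0) (h₁ : deriv Φ a = 0) : EqOn Φ 0 (Icc a b) := by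
  intro y hy
  have hsub := sub_deriv_eq_mul_exp_of_deriv_deriv_eq hΦ hΦ' hODE y hy
  have hadd := add_deriv_eq_mul_exp_of_deriv_deriv_eq hΦ hΦ' hODE y hy
  rw [h₀, h₁, sub_zero, zero_mul] at hsub
  rw [h₀, h₁, add_zero, zero_mul] at hadd
  rw [Pi.zero_apply]
  linarith

end SecondOrder

theorem eq_or_eq_of_sq_eq_sq_mul_sq {σ E : ℝ} (hE : 1 < E)
    (h : (1 + σ) ^ 2 = (1 - σ) ^ 2 * E ^ 2) :
    σ = (E - 1) / (E + 1) ∨ σ = (E + 1) / (E - 1) := by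
  have hfac : (1 + σ - E * (1 - σ)) * (1 + σ + E * (1 - σ)) = 0 := by linear_combination h
  rcases mul_eq_zero.mp hfac with hminus | hplus
  · left
    rw [eq_div_iff (by linarith)]
    linarith
  · right
    rw [eq_div_iff (by linarith)]
    linarith

/-- Any nontrivial solution of the Steklov eigenvalue problem on (0,1)
has eigenvalue σ₁ = (e-1)/(e+1) or σ₂ = (e+1)/(e-1). -/
theorem steklov_eigenvalues (σ : ℝ) (Φ : ℝ → ℝ)
    (hΦ : Differentiable ℝ Φ) (hΦ' : Differentiable ℝ (deriv Φ))
    (hODE : ∀ x ∈ Set.Icc (0:ℝ) 1, deriv (deriv Φ) x = Φ x)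
    (hbc0 : -(deriv Φ 0) = σ * Φ 0)
    (hbc1 : deriv Φ 1 = σ * Φ 1)
    (hne : ∃ x ∈ Set.Icc (0:ℝ) 1, Φ x ≠ 0) :
    σ = (Real.exp 1 - 1) / (Real.exp 1 + 1) ∨
    σ = (Real.exp 1 + 1) / (Real.exp 1 - 1) := by
  have hΦ'0 : deriv Φ 0 = -(σ * Φ 0) := by linarith
  have hΦ0 : Φ 0 ≠ 0 := fun h₀ => by
    obtain ⟨x, hx, hΦx⟩ := hne
    exact hΦx <| eqOn_zero_of_deriv_deriv_eq hΦ hΦ' hODE h₀ (by simp [hΦ'0, h₀]) hx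
  have hsub := sub_deriv_eq_mul_exp_of_deriv_deriv_eq hΦ hΦ' hODE 1 (right_mem_Icc.2 zero_le_one)
  have hadd := add_deriv_eq_mul_exp_of_deriv_deriv_eq hΦ hΦ' hODE 1 (right_mem_Icc.2 zero_le_one)
  rw [zero_sub] at hsub
  rw [sub_zero] at hadd
  rw [hbc1, hΦ'0] at hsub hadd
  have hexp : exp (-1) * exp 1 = 1 := by rw [← exp_add, neg_add_cancel, exp_zero]
  have hsq : ((1 + σ) ^ 2 - (1 - σ) ^ 2 * exp 1 ^ 2) * Φ 0 = 0 := by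
    linear_combination ((1 - σ) * exp 1) * hadd - ((1 + σ) * exp 1) * hsub
      - (1 + σ) ^ 2 * Φ 0 * hexp
  refine eq_or_eq_of_sq_eq_sq_mul_sq (one_lt_exp_iff.2 one_pos) ?_
  linear_combination (mul_eq_zero.1 hsq).resolve_right hΦ0
end

section
/- Let e denote Euler's number, σ₁ := (e−1)/(e+1), g : ℝ → ℝ, λ ∈ ℝ, and c ∈ ℝ with c ≠ 0. Define u(x) := c·(eˣ + e^{1−x}). Then u satisfies u''(x) = u(x) for all x ∈ [0,1], and u satisfies the nonlinear boundary conditions −u'(0) = λ·u(0) + g(u(0)) and u'(1) = λ·u(1) + g(u(1)) if and only if λ = σ₁ − g((1+e)·c)/((1+e)·c). -/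
open Real

theorem Real.hasDerivAt_exp_const_sub (a x : ℝ) :
    HasDerivAt (fun x => exp (a - x)) (-exp (a - x)) x := by
  simpa using ((hasDerivAt_id x).const_sub a).exp

lemma deriv_exp_add_exp_one_sub (c : ℝ) :
    deriv (fun x => c * (exp x + exp (1 - x))) = fun x => c * (exp x - exp (1 - x)) := by
  funext x
  simpa [sub_eq_add_neg] using
    (((hasDerivAt_exp x).add (hasDerivAt_exp_const_sub 1 x)).const_mul c).deriv

lemma deriv_exp_sub_exp_one_sub (c : ℝ) :
    deriv (fun x => c * (exp x - exp (1 - x))) = fun x => c * (exp x + exp (1 - x)) := by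
  funext x
  simpa using (((hasDerivAt_exp x).sub (hasDerivAt_exp_const_sub 1 x)).const_mul c).deriv

lemma eq_mul_add_iff_eq_div_sub_div {a b l y : ℝ} (ha : a ≠ 0) :
    b = l * a + y ↔ l = b / a - y / a := by
  rw [← sub_div, eq_div_iff ha]
  constructor <;> intro h <;> linarith

/-- The functions u(x) = c(e^x + e^(1-x)) solve u'' = u, and satisfy the
nonlinear boundary conditions iff λ = σ₁ - g((1+e)c)/((1+e)c). -/
theorem first_branch_equilibria (g : ℝ → ℝ) (lam c : ℝ) (hc : c ≠ 0)
    (u : ℝ → ℝ) (hu : u = fun x => c * (Real.exp x + Real.exp (1 - x))) :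
    (∀ x ∈ Set.Icc (0:ℝ) 1, deriv (deriv u) x = u x) ∧
    ((-(deriv u 0) = lam * u 0 + g (u 0) ∧ deriv u 1 = lam * u 1 + g (u 1)) ↔
      lam = (Real.exp 1 - 1) / (Real.exp 1 + 1)
        - g ((1 + Real.exp 1) * c) / ((1 + Real.exp 1) * c)) := by
  have hd : deriv u = fun x => c * (exp x - exp (1 - x)) := by
    rw [hu, deriv_exp_add_exp_one_sub]
  refine ⟨fun x _ => by rw [hd, deriv_exp_sub_exp_one_sub, hu], ?_⟩
  -- both boundary conditions reduce to the same equation c (e - 1) = λ (1 + e) c + g ((1 + e) c)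
  have hu0 : u 0 = (1 + exp 1) * c := by simp only [hu, exp_zero, sub_zero]; ring
  have hu1 : u 1 = (1 + exp 1) * c := by simp only [hu, sub_self, exp_zero]; ring
  have hd0 : -deriv u 0 = c * (exp 1 - 1) := by simp only [hd, exp_zero, sub_zero]; ring
  have hd1 : deriv u 1 = c * (exp 1 - 1) := by simp [hd]
  have hA : (1 + exp 1) * c ≠ 0 := mul_ne_zero (by positivity) hc
  have hσ : c * (exp 1 - 1) / ((1 + exp 1) * c) = (exp 1 - 1) / (exp 1 + 1) := by
    field_simp
    ring
  rw [hu0, hu1, hd0, hd1, and_self, eq_mul_add_iff_eq_div_sub_div hA, hσ]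
end

section
/- Let e denote Euler's number, σ₂ := (e+1)/(e−1), g : ℝ → ℝ an odd function (g(−s) = −g(s) for all s), λ ∈ ℝ, and c ∈ ℝ with c ≠ 0. Define u(x) := c·(eˣ − e^{1−x}). Then u satisfies u''(x) = u(x) for all x ∈ [0,1], and u satisfies the nonlinear boundary conditions −u'(0) = λ·u(0) + g(u(0)) and u'(1) = λ·u(1) + g(u(1)) if and only if λ = σ₂ − g((e−1)·c)/((e−1)·c). -/
/-! `u = c (eˣ - e^{1-x})` is antisymmetric about `x = 1/2` and `u'` is symmetric, so for odd `g`
the boundary condition at `0` is the negative of the one at `1`. At `1` we have `u = (e - 1) c` and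
`u' = (e + 1) c`, and the condition is linear in `λ` with coefficient `(e - 1) c ≠ 0`. -/

open Real

theorem hasDerivAt_mul_exp_sub_exp_const_sub (a c x : ℝ) :
    HasDerivAt (fun x => c * (exp x - exp (a - x))) (c * (exp x + exp (a - x))) x :=
  (((hasDerivAt_id' x).exp.sub ((hasDerivAt_id' x).const_sub a).exp).const_mul c).congr_deriv
    (by ring)

theorem hasDerivAt_mul_exp_add_exp_const_sub (a c x : ℝ) :
    HasDerivAt (fun x => c * (exp x + exp (a - x))) (c * (exp x - exp (a - x))) x :=
  (((hasDerivAt_id' x).exp.add ((hasDerivAt_id' x).const_sub a).exp).const_mul c).congr_deriv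
    (by ring)

theorem deriv_mul_exp_sub_exp_const_sub (a c : ℝ) :
    deriv (fun x => c * (exp x - exp (a - x))) = fun x => c * (exp x + exp (a - x)) :=
  funext fun x => (hasDerivAt_mul_exp_sub_exp_const_sub a c x).deriv

theorem deriv_deriv_mul_exp_sub_exp_const_sub (a c : ℝ) :
    deriv (deriv fun x => c * (exp x - exp (a - x))) = fun x => c * (exp x - exp (a - x)) := by
  rw [deriv_mul_exp_sub_exp_const_sub]
  exact funext fun x => (hasDerivAt_mul_exp_add_exp_const_sub a c x).deriv

theorem neg_eq_mul_neg_add_apply_neg_iff {R : Type*} [Ring R] {g : R → R}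
    (hodd : ∀ s, g (-s) = -g s) (lam s d : R) :
    -d = lam * -s + g (-s) ↔ d = lam * s + g s := by
  rw [hodd, mul_neg, ← neg_add, neg_inj]

theorem eq_mul_add_iff_eq_div_sub {K : Type*} [Field K] {lam s d t : K} (hs : s ≠ 0) :
    d = lam * s + t ↔ lam = d / s - t / s := by
  rw [← sub_div, eq_div_iff hs, eq_sub_iff_add_eq, eq_comm]

/-- For odd g, the functions u(x) = c(e^x - e^(1-x)) solve u'' = u, and satisfy the
nonlinear boundary conditions iff λ = σ₂ - g((e-1)c)/((e-1)c). -/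
theorem second_branch_equilibria (g : ℝ → ℝ) (hodd : ∀ s : ℝ, g (-s) = -g s)
    (lam c : ℝ) (hc : c ≠ 0)
    (u : ℝ → ℝ) (hu : u = fun x => c * (Real.exp x - Real.exp (1 - x))) :
    (∀ x ∈ Set.Icc (0:ℝ) 1, deriv (deriv u) x = u x) ∧
    ((-(deriv u 0) = lam * u 0 + g (u 0) ∧ deriv u 1 = lam * u 1 + g (u 1)) ↔
      lam = (Real.exp 1 + 1) / (Real.exp 1 - 1)
        - g ((Real.exp 1 - 1) * c) / ((Real.exp 1 - 1) * c)) := by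
  subst hu
  refine ⟨fun x _ => congrFun (deriv_deriv_mul_exp_sub_exp_const_sub 1 c) x, ?_⟩
  have he : exp 1 - 1 ≠ 0 := (sub_pos.mpr (one_lt_exp_iff.mpr one_pos)).ne'
  have hu0 : c * (exp 0 - exp (1 - 0)) = -((exp 1 - 1) * c) := by rw [sub_zero, exp_zero]; ring
  have hu1 : c * (exp 1 - exp (1 - 1)) = (exp 1 - 1) * c := by rw [sub_self, exp_zero]; ring
  have hu'0 : c * (exp 0 + exp (1 - 0)) = (exp 1 + 1) * c := by rw [sub_zero, exp_zero]; ring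
  have hu'1 : c * (exp 1 + exp (1 - 1)) = (exp 1 + 1) * c := by rw [sub_self, exp_zero]; ring
  simp only [deriv_mul_exp_sub_exp_const_sub, hu0, hu1, hu'0, hu'1]
  rw [neg_eq_mul_neg_add_apply_neg_iff hodd, and_self,
    eq_mul_add_iff_eq_div_sub (mul_ne_zero he hc), mul_div_mul_right _ _ hc]
end

section
/- Let λ ∈ ℝ, let μ > −1, and set s := √(1+μ) > 0 (allowing also s = 0 when μ = −1 is excluded, so s > 0). There exists a function φ : ℝ → ℝ, not identically zero on [0,1], twice differentiable with φ''(x) = (1+μ)·φ(x) for all x ∈ [0,1] and satisfying −φ'(0) = (λ+1)·φ(0) and φ'(1) = (λ+1)·φ(1), if and only if e^{2s}·(s − (λ+1))² = (s + (λ+1))². -/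
/-!
On `[0,1]` the equation `φ'' = s²φ` has the first integrals `(φ' + tφ)e^{-tx}` for `t = ±s`.
Comparing them at `x = 0` and `x = 1` and inserting the Robin conditions
`φ'(0) = -(λ+1)φ(0)`, `φ'(1) = (λ+1)φ(1)` gives two linear relations between `φ(0)` and `φ(1)`,
whose compatibility for `φ(0) ≠ 0` is `e^{2s}(s-(λ+1))² = (s+(λ+1))²`; and `φ(0) = 0` would force
`φ ≡ 0` on `[0,1]`. Conversely, `(s-(λ+1))e^{sx} + (s+(λ+1))e^{-sx}` satisfies the left boundary
condition for every `λ`, and the right one exactly under that identity.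
-/

open Real Set

lemma hasDerivAt_mul_exp_add_mul_exp_neg (p q s x : ℝ) :
    HasDerivAt (fun x => p * exp (s * x) + q * exp (-(s * x)))
      (s * p * exp (s * x) + -(s * q) * exp (-(s * x))) x := by
  have hpos : HasDerivAt (fun x => exp (s * x)) (exp (s * x) * s) x :=
    ((hasDerivAt_id x).const_mul s).exp.congr_deriv (by simp)
  have hneg : HasDerivAt (fun x => exp (-(s * x))) (exp (-(s * x)) * -s) x :=
    ((hasDerivAt_id x).const_mul s).neg.exp.congr_deriv (by simp)
  exact ((hpos.const_mul p).add (hneg.const_mul q)).congr_deriv (by ring)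

lemma deriv_mul_exp_add_mul_exp_neg (p q s : ℝ) :
    deriv (fun x => p * exp (s * x) + q * exp (-(s * x)))
      = fun x => s * p * exp (s * x) + -(s * q) * exp (-(s * x)) :=
  funext fun x => (hasDerivAt_mul_exp_add_mul_exp_neg p q s x).deriv

section FirstIntegral

variable {φ : ℝ → ℝ} {k t a b : ℝ}

/-- Its derivative is `(φ'' - t²φ) e^{-tx}`. -/
lemma deriv_add_mul_mul_exp_neg_eq_of_deriv_deriv_eq (hφ : Differentiable ℝ φ)
    (hφ' : Differentiable ℝ (deriv φ)) (hode : ∀ x ∈ Icc a b, deriv (deriv φ) x = k * φ x)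
    (ht : t ^ 2 = k) :
    ∀ x ∈ Icc a b, (deriv φ x + t * φ x) * exp (-(t * x))
      = (deriv φ a + t * φ a) * exp (-(t * a)) := by
  have hd : ∀ x, HasDerivAt (fun x => (deriv φ x + t * φ x) * exp (-(t * x)))
      ((deriv (deriv φ) x + t * deriv φ x) * exp (-(t * x))
        + (deriv φ x + t * φ x) * (exp (-(t * x)) * -t)) x := fun x =>
    ((hφ' x).hasDerivAt.add ((hφ x).hasDerivAt.const_mul t)).mul
      (((hasDerivAt_id x).const_mul t).neg.exp.congr_deriv (by simp))
  refine constant_of_has_deriv_right_zero (fun x _ => (hd x).continuousAt.continuousWithinAt)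
    fun x hx => ?_
  have hzero : (deriv (deriv φ) x + t * deriv φ x) * exp (-(t * x))
      + (deriv φ x + t * φ x) * (exp (-(t * x)) * -t) = 0 := by
    rw [hode x (Ico_subset_Icc_self hx), ← ht]; ring
  exact (hzero ▸ hd x).hasDerivWithinAt

lemma eqOn_zero_of_deriv_deriv_eq_s8 (hφ : Differentiable ℝ φ)
    (hφ' : Differentiable ℝ (deriv φ)) (hode : ∀ x ∈ Icc a b, deriv (deriv φ) x = k * φ x)
    (ht : t ^ 2 = k) (ht0 : t ≠ 0) (ha : φ a = 0) (ha' : deriv φ a = 0) :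
    EqOn φ 0 (Icc a b) := by
  intro x hx
  have hplus := deriv_add_mul_mul_exp_neg_eq_of_deriv_deriv_eq hφ hφ' hode ht x hx
  have hminus := deriv_add_mul_mul_exp_neg_eq_of_deriv_deriv_eq hφ hφ' hode
    (by rw [neg_sq, ht]) x hx
  rw [ha, ha', mul_zero, add_zero, zero_mul] at hplus hminus
  have hp := (mul_eq_zero.1 hplus).resolve_right (exp_ne_zero _)
  have hm := (mul_eq_zero.1 hminus).resolve_right (exp_ne_zero _)
  have h2 : (2 * t) * φ x = 0 := by linear_combination hp - hm
  exact (mul_eq_zero.1 h2).resolve_left (by positivity)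

end FirstIntegral

/-- The eigenvalue problem of the linearization, with `k = 1 + μ` and `L = λ + 1`. -/
def IsRobinEigenfunction (k L : ℝ) (φ : ℝ → ℝ) : Prop :=
  (∃ x ∈ Icc (0 : ℝ) 1, φ x ≠ 0) ∧
    Differentiable ℝ φ ∧ Differentiable ℝ (deriv φ) ∧
    (∀ x ∈ Icc (0 : ℝ) 1, deriv (deriv φ) x = k * φ x) ∧
    -(deriv φ 0) = L * φ 0 ∧ deriv φ 1 = L * φ 1

variable {k s L : ℝ}

theorem IsRobinEigenfunction.exp_two_mul_mul_sub_sq_eq_add_sq {φ : ℝ → ℝ}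
    (hφ : IsRobinEigenfunction k L φ) (hs : s ≠ 0) (hk : s ^ 2 = k) :
    exp (2 * s) * (s - L) ^ 2 = (s + L) ^ 2 := by
  obtain ⟨⟨x, hx, hφx⟩, hdiff, hdiff', hode, h0, h1⟩ := hφ
  have hφ0 : φ 0 ≠ 0 := by
    intro hφ0
    rw [hφ0, mul_zero, neg_eq_zero] at h0
    exact hφx (eqOn_zero_of_deriv_deriv_eq_s8 hdiff hdiff' hode hk hs hφ0 h0 hx)
  have hmem : (1 : ℝ) ∈ Icc (0 : ℝ) 1 := right_mem_Icc.2 zero_le_one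
  have hplus := deriv_add_mul_mul_exp_neg_eq_of_deriv_deriv_eq hdiff hdiff' hode hk 1 hmem
  have hminus := deriv_add_mul_mul_exp_neg_eq_of_deriv_deriv_eq hdiff hdiff' hode
    (by rw [neg_sq, hk]) 1 hmem
  simp only [mul_zero, neg_zero, exp_zero, mul_one, neg_mul, neg_neg] at hplus hminus
  have hexp : exp s * exp (-s) = 1 := by rw [← exp_add, add_neg_cancel, exp_zero]
  have hleft : (L + s) * φ 1 = (s - L) * φ 0 * exp s := by
    linear_combination exp s * hplus - exp s * h1 * exp (-s) - exp s * h0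
      - (L * φ 1 + s * φ 1) * hexp
  have hright : (L - s) * φ 1 * exp s = -(L + s) * φ 0 := by
    linear_combination hminus - exp s * h1 - h0
  refine mul_right_cancel₀ hφ0 ?_
  rw [two_mul, exp_add]
  linear_combination ((L - s) * exp s) * hleft - (L + s) * hright

theorem isRobinEigenfunction_of_exp_two_mul_mul_sub_sq_eq_add_sq (hs : s ≠ 0) (hk : s ^ 2 = k)
    (h : exp (2 * s) * (s - L) ^ 2 = (s + L) ^ 2) :
    IsRobinEigenfunction k L fun x => (s - L) * exp (s * x) + (s + L) * exp (-(s * x)) := by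
  have hexp : exp s * exp (-s) = 1 := by rw [← exp_add, add_neg_cancel, exp_zero]
  rw [two_mul, exp_add] at h
  refine ⟨⟨0, left_mem_Icc.2 zero_le_one, ?_⟩,
    fun x => (hasDerivAt_mul_exp_add_mul_exp_neg _ _ s x).differentiableAt, ?_, ?_, ?_, ?_⟩
  · simp only [mul_zero, neg_zero, exp_zero, mul_one]
    intro h0
    exact hs (by linarith)
  · rw [deriv_mul_exp_add_mul_exp_neg]
    exact fun x => (hasDerivAt_mul_exp_add_mul_exp_neg _ _ s x).differentiableAt
  · intro x _
    rw [deriv_mul_exp_add_mul_exp_neg, deriv_mul_exp_add_mul_exp_neg, ← hk]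
    ring
  · simp only [deriv_mul_exp_add_mul_exp_neg, mul_zero, neg_zero, exp_zero, mul_one]
    ring
  · simp only [deriv_mul_exp_add_mul_exp_neg, mul_one]
    linear_combination exp (-s) * h - (s - L) ^ 2 * exp s * hexp

theorem exists_isRobinEigenfunction_iff (hs : s ≠ 0) (hk : s ^ 2 = k) :
    (∃ φ, IsRobinEigenfunction k L φ) ↔ exp (2 * s) * (s - L) ^ 2 = (s + L) ^ 2 :=
  ⟨fun ⟨_, hφ⟩ => hφ.exp_two_mul_mul_sub_sq_eq_add_sq hs hk,
    fun h => ⟨_, isRobinEigenfunction_of_exp_two_mul_mul_sub_sq_eq_add_sq hs hk h⟩⟩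

/-- For μ > -1 and s = √(1+μ), the linearization at the trivial equilibrium has
eigenvalue μ iff e^(2s)(s-(λ+1))² = (s+(λ+1))². -/
theorem eigenvalue_characterization_above (lam μ : ℝ) (hμ : -1 < μ) :
    (∃ φ : ℝ → ℝ, (∃ x ∈ Set.Icc (0:ℝ) 1, φ x ≠ 0) ∧
      Differentiable ℝ φ ∧ Differentiable ℝ (deriv φ) ∧
      (∀ x ∈ Set.Icc (0:ℝ) 1, deriv (deriv φ) x = (1 + μ) * φ x) ∧
      -(deriv φ 0) = (lam + 1) * φ 0 ∧
      deriv φ 1 = (lam + 1) * φ 1) ↔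
    Real.exp (2 * Real.sqrt (1 + μ)) * (Real.sqrt (1 + μ) - (lam + 1)) ^ 2
      = (Real.sqrt (1 + μ) + (lam + 1)) ^ 2 := by
  have h1μ : (0 : ℝ) < 1 + μ := by linarith
  exact exists_isRobinEigenfunction_iff (sqrt_pos.2 h1μ).ne' (sq_sqrt h1μ.le)
end

section
/- Let λ < −1 and μ ≥ −1. Then there is no function φ : ℝ → ℝ, not identically zero on [0,1], twice differentiable with φ''(x) = (1+μ)·φ(x) for all x ∈ [0,1] and satisfying −φ'(0) = (λ+1)·φ(0) and φ'(1) = (λ+1)·φ(1). In particular, for λ < −1 the linearization at the trivial equilibrium has no eigenvalue μ ≥ −1, so all eigenvalues are strictly less than −1 and the trivial equilibrium is asymptotically stable. -/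
/-!
The quantity `φ φ'` is nondecreasing on `[0, 1]`, because `(φ φ')' = φ'² + (1 + μ) φ² ≥ 0`.
The boundary conditions give `(φ φ')(0) = -(λ + 1) φ(0)² ≥ 0 ≥ (λ + 1) φ(1)² = (φ φ')(1)` when
`λ < -1`, so `φ φ'` is constant, `φ(0) = 0`, and `φ'² + (1 + μ) φ² = 0` in the interior. Hence
`φ' = 0` on `(0, 1)`, and `φ` vanishes identically on `[0, 1]`.
-/

open Set

section

variable {φ : ℝ → ℝ} {c a b : ℝ}

theorem deriv_mul_deriv_self {x : ℝ} (hφ : DifferentiableAt ℝ φ x)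
    (hφ' : DifferentiableAt ℝ (deriv φ) x) :
    deriv (fun y => φ y * deriv φ y) x = deriv φ x ^ 2 + φ x * deriv (deriv φ) x := by
  rw [deriv_fun_mul hφ hφ', sq]

theorem monotoneOn_mul_deriv_self (hc : 0 ≤ c) (hφ : Differentiable ℝ φ)
    (hφ' : Differentiable ℝ (deriv φ)) (hode : ∀ x ∈ Icc a b, deriv (deriv φ) x = c * φ x) :
    MonotoneOn (fun x => φ x * deriv φ x) (Icc a b) := by
  have hdiff : Differentiable ℝ (fun x => φ x * deriv φ x) := hφ.mul hφ'
  refine monotoneOn_of_deriv_nonneg (convex_Icc a b) hdiff.continuous.continuousOn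
    hdiff.differentiableOn fun x hx => ?_
  rw [interior_Icc] at hx
  rw [deriv_mul_deriv_self (hφ x) (hφ' x), hode x (Ioo_subset_Icc_self hx)]
  nlinarith [sq_nonneg (deriv φ x), mul_nonneg hc (sq_nonneg (φ x))]

theorem deriv_eq_zero_of_mul_deriv_self_le (hc : 0 ≤ c) (hφ : Differentiable ℝ φ)
    (hφ' : Differentiable ℝ (deriv φ)) (hode : ∀ x ∈ Icc a b, deriv (deriv φ) x = c * φ x)
    (hba : φ b * deriv φ b ≤ φ a * deriv φ a) : ∀ x ∈ Ioo a b, deriv φ x = 0 := by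
  set h : ℝ → ℝ := fun x => φ x * deriv φ x
  have hmono : MonotoneOn h (Icc a b) := monotoneOn_mul_deriv_self hc hφ hφ' hode
  intro x hx
  have hab : a ≤ b := (hx.1.trans hx.2).le
  have hconst : ∀ y ∈ Ioo a b, h y = h a := fun y hy =>
    le_antisymm
      ((hmono (Ioo_subset_Icc_self hy) (right_mem_Icc.2 hab) hy.2.le).trans hba)
      (hmono (left_mem_Icc.2 hab) (Ioo_subset_Icc_self hy) hy.1.le)
  have hderiv : deriv h x = 0 := by
    rw [(Filter.eventuallyEq_of_mem (Ioo_mem_nhds hx.1 hx.2) hconst).deriv_eq, deriv_const]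
  rw [deriv_mul_deriv_self (hφ x) (hφ' x), hode x (Ioo_subset_Icc_self hx)] at hderiv
  nlinarith [sq_nonneg (deriv φ x), mul_nonneg hc (sq_nonneg (φ x))]

end

theorem eqOn_Icc_of_deriv_eq_zero {f : ℝ → ℝ} {a b : ℝ} (hf : ContinuousOn f (Icc a b))
    (hf' : DifferentiableOn ℝ f (Ioo a b)) (h0 : ∀ x ∈ Ioo a b, deriv f x = 0) :
    ∀ x ∈ Icc a b, f x = f a := by
  intro x hx
  rw [← interior_Icc] at hf' h0
  have hmono := monotoneOn_of_deriv_nonneg (convex_Icc a b) hf hf' fun y hy => (h0 y hy).ge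
  have hanti := antitoneOn_of_deriv_nonpos (convex_Icc a b) hf hf' fun y hy => (h0 y hy).le
  have ha : a ∈ Icc a b := left_mem_Icc.2 (hx.1.trans hx.2)
  exact le_antisymm (hanti ha hx hx.1) (hmono ha hx hx.1)

/-- For λ < -1 the linearization at the trivial equilibrium has no eigenvalue μ ≥ -1. -/
theorem no_eigenvalue_above_for_lambda_below (lam μ : ℝ) (hlam : lam < -1) (hμ : -1 ≤ μ) :
    ¬ ∃ φ : ℝ → ℝ, (∃ x ∈ Set.Icc (0:ℝ) 1, φ x ≠ 0) ∧
      Differentiable ℝ φ ∧ Differentiable ℝ (deriv φ) ∧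
      (∀ x ∈ Set.Icc (0:ℝ) 1, deriv (deriv φ) x = (1 + μ) * φ x) ∧
      -(deriv φ 0) = (lam + 1) * φ 0 ∧
      deriv φ 1 = (lam + 1) * φ 1 := by
  rintro ⟨φ, ⟨x₀, hx₀, hφx₀⟩, hφ, hφ', hode, hb0, hb1⟩
  have hc : 0 ≤ 1 + μ := by linarith
  have h01 : φ 0 * deriv φ 0 ≤ φ 1 * deriv φ 1 :=
    monotoneOn_mul_deriv_self hc hφ hφ' hode (left_mem_Icc.2 zero_le_one)
      (right_mem_Icc.2 zero_le_one) zero_le_one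
  have hφ0 : φ 0 = 0 := by
    rw [hb1, show deriv φ 0 = -((lam + 1) * φ 0) by linarith] at h01
    refine pow_eq_zero_iff two_ne_zero |>.1 (le_antisymm ?_ (sq_nonneg _))
    nlinarith [mul_nonneg (sq_nonneg (φ 1)) (by linarith : 0 ≤ -(lam + 1))]
  have hd : ∀ x ∈ Ioo (0:ℝ) 1, deriv φ x = 0 :=
    deriv_eq_zero_of_mul_deriv_self_le hc hφ hφ' hode (by
      rw [hb1, hφ0, zero_mul]; nlinarith [sq_nonneg (φ 1)])
  exact hφx₀ (by rw [eqOn_Icc_of_deriv_eq_zero hφ.continuous.continuousOn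
    hφ.differentiableOn hd x₀ hx₀, hφ0])
end

section
/- For every λ > −1 there exists s > λ+1 with s > 0 such that e^{2s}·(s − (λ+1))² = (s + (λ+1))². Consequently, there exists μ := s² − 1 > (λ+1)² − 1 and a function φ, not identically zero on [0,1], twice differentiable with φ'' = (1+μ)φ on [0,1], −φ'(0) = (λ+1)φ(0) and φ'(1) = (λ+1)φ(1). -/
/-!
Writing `a = λ + 1 > 0`, the function `s ↦ eˢ (s - a) - (s + a)` is negative at `s = a` and
nonnegative at `s = a + 2`, so it has a zero `s > a`; squaring gives the characteristic equation.
For such `s` the function `φ x = (s - a) e^{s x} + (s + a) e^{-s x}` solves `φ'' = s² φ`, satisfies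
the Robin condition at `0` for any `s`, and the one at `1` exactly because `eˢ (s - a) = s + a`.
-/

open Real

noncomputable section

def expCombination (A B s x : ℝ) : ℝ := A * exp (s * x) + B * exp (-(s * x))

theorem hasDerivAt_expCombination (A B s x : ℝ) :
    HasDerivAt (expCombination A B s) (expCombination (s * A) (-(s * B)) s x) x := by
  have hlin : HasDerivAt (fun x => s * x) s x := by simpa using (hasDerivAt_id x).const_mul s
  refine ((hlin.exp.const_mul A).add (hlin.neg.exp.const_mul B)).congr_deriv ?_
  simp only [expCombination, Pi.neg_apply]
  ring

theorem deriv_expCombination (A B s : ℝ) :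
    deriv (expCombination A B s) = expCombination (s * A) (-(s * B)) s :=
  funext fun x => (hasDerivAt_expCombination A B s x).deriv

theorem differentiable_expCombination (A B s : ℝ) : Differentiable ℝ (expCombination A B s) :=
  fun x => (hasDerivAt_expCombination A B s x).differentiableAt

theorem deriv_deriv_expCombination (A B s x : ℝ) :
    deriv (deriv (expCombination A B s)) x = s ^ 2 * expCombination A B s x := by
  simp only [deriv_expCombination, expCombination]
  ring

theorem exists_exp_mul_sub_eq_add {a : ℝ} (ha : 0 < a) : ∃ s, a < s ∧ exp s * (s - a) = s + a := by
  set g : ℝ → ℝ := fun s => exp s * (s - a) - (s + a)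
  have hga : g a = -(2 * a) := by simp only [g]; ring
  have hgb : 0 ≤ g (a + 2) := by
    have := add_one_le_exp (a + 2)
    simp only [g]
    nlinarith
  obtain ⟨s, hs, hgs⟩ := intermediate_value_Icc (by linarith) (by fun_prop : ContinuousOn g _)
    (⟨by linarith, hgb⟩ : (0 : ℝ) ∈ Set.Icc (g a) (g (a + 2)))
  have hsa : s ≠ a := by rintro rfl; linarith
  exact ⟨s, lt_of_le_of_ne hs.1 hsa.symm, by simp only [g] at hgs; linarith⟩

theorem expCombination_robin_left (a s : ℝ) :
    -deriv (expCombination (s - a) (s + a) s) 0 = a * expCombination (s - a) (s + a) s 0 := by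
  simp only [deriv_expCombination, expCombination, mul_zero, neg_zero, exp_zero]
  ring

theorem expCombination_robin_right {a s : ℝ} (h : exp s * (s - a) = s + a) :
    deriv (expCombination (s - a) (s + a) s) 1 = a * expCombination (s - a) (s + a) s 1 := by
  have h' : exp (-s) * (s + a) = s - a := by
    rw [← h, ← mul_assoc, ← exp_add, neg_add_cancel, exp_zero, one_mul]
  simp only [deriv_expCombination, expCombination, mul_one]
  linear_combination (s - a) * h - (s + a) * h'

end

/-- For every λ > -1 there is s > λ+1 with e^(2s)(s-(λ+1))² = (s+(λ+1))²,
yielding an eigenvalue μ = s² - 1 > (λ+1)² - 1 of the linearization at the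
trivial equilibrium. -/
theorem first_eigenvalue_exists (lam : ℝ) (hlam : -1 < lam) :
    ∃ s : ℝ, lam + 1 < s ∧ 0 < s ∧
      Real.exp (2 * s) * (s - (lam + 1)) ^ 2 = (s + (lam + 1)) ^ 2 ∧
      (lam + 1) ^ 2 - 1 < s ^ 2 - 1 ∧
      ∃ φ : ℝ → ℝ, (∃ x ∈ Set.Icc (0:ℝ) 1, φ x ≠ 0) ∧
        Differentiable ℝ φ ∧ Differentiable ℝ (deriv φ) ∧
        (∀ x ∈ Set.Icc (0:ℝ) 1, deriv (deriv φ) x = (1 + (s ^ 2 - 1)) * φ x) ∧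
        -(deriv φ 0) = (lam + 1) * φ 0 ∧
        deriv φ 1 = (lam + 1) * φ 1 := by
  obtain ⟨s, hs, heq⟩ := exists_exp_mul_sub_eq_add (show 0 < lam + 1 by linarith)
  have hs0 : 0 < s := by linarith
  have hchar : exp (2 * s) * (s - (lam + 1)) ^ 2 = (s + (lam + 1)) ^ 2 := by
    rw [← heq, two_mul, exp_add]
    ring
  have hφ0 : expCombination (s - (lam + 1)) (s + (lam + 1)) s 0 = 2 * s := by
    simp only [expCombination, mul_zero, neg_zero, exp_zero]
    ring
  refine ⟨s, hs, hs0, hchar, by nlinarith, expCombination (s - (lam + 1)) (s + (lam + 1)) s,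
    ⟨0, by simp, by rw [hφ0]; positivity⟩, differentiable_expCombination _ _ _,
    by rw [deriv_expCombination]; exact differentiable_expCombination _ _ _,
    fun x _ => by rw [deriv_deriv_expCombination]; ring,
    expCombination_robin_left _ _, expCombination_robin_right heq⟩
end

section
/- Let e denote Euler's number and σ₁ := (e−1)/(e+1). For every λ > σ₁ there exist μ > 0 and a function φ : ℝ → ℝ, not identically zero on [0,1], twice differentiable with φ''(x) = (1+μ)·φ(x) for all x ∈ [0,1], satisfying −φ'(0) = λ·φ(0) and φ'(1) = λ·φ(1). That is, for λ > σ₁ the linearization at infinity has a positive eigenvalue. -/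
/-!
The eigenfunction is the even mode `φ x = cosh (ω * (x - 1/2))`, for which `φ'' = ω² φ`, and
both Robin conditions reduce to the single equation `ω * tanh (ω / 2) = λ`. The left side is
continuous, equals `tanh (1/2) = σ₁` at `ω = 1` and grows at least like `ω * tanh (1/2)`, so for
`λ > σ₁` the intermediate value theorem gives a root `ω > 1`, i.e. the eigenvalue `μ = ω² - 1 > 0`.
-/

open Real

namespace Real

theorem tanh_eq_one_sub_two_div (x : ℝ) : tanh x = 1 - 2 / (exp (2 * x) + 1) := by
  have h2 : exp (2 * x) = exp x * exp x := by rw [two_mul, exp_add]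
  have hneg : exp (-x) = (exp x)⁻¹ := exp_neg x
  rw [tanh_eq, h2, hneg]
  have := exp_pos x
  field_simp
  ring

theorem tanh_strictMono : StrictMono tanh := fun x y hxy => by
  simp only [tanh_eq_one_sub_two_div]
  gcongr

@[fun_prop]
theorem continuous_tanh : Continuous tanh := by
  simp only [funext tanh_eq_one_sub_two_div]
  exact continuous_const.sub (continuous_const.div (by fun_prop) fun x => by positivity)

theorem tanh_pos {x : ℝ} (hx : 0 < x) : 0 < tanh x := tanh_zero ▸ tanh_strictMono hx

theorem tanh_one_half : tanh (1 / 2) = (exp 1 - 1) / (exp 1 + 1) := by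
  rw [tanh_eq_one_sub_two_div, mul_one_div_cancel two_ne_zero]
  field_simp
  ring

end Real

theorem exists_one_lt_mul_tanh_half_eq {lam : ℝ} (hlam : tanh (1 / 2) < lam) :
    ∃ ω, 1 < ω ∧ ω * tanh (ω / 2) = lam := by
  set f : ℝ → ℝ := fun ω => ω * tanh (ω / 2)
  have hσ : 0 < tanh (1 / 2) := tanh_pos one_half_pos
  set M := lam / tanh (1 / 2)
  have hM : 1 < M := (one_lt_div hσ).mpr hlam
  have hfM : lam ≤ f M := calc
    lam = M * tanh (1 / 2) := (div_mul_cancel₀ lam hσ.ne').symm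
    _ ≤ M * tanh (M / 2) := by gcongr; exact tanh_strictMono.monotone (by linarith)
  have hf : Continuous f := by unfold f; fun_prop
  obtain ⟨ω, ⟨hω1, -⟩, hω⟩ := intermediate_value_Ioc hM.le hf.continuousOn
    ⟨by simpa [f] using hlam, hfM⟩
  exact ⟨ω, hω1, hω⟩

section CoshMode

variable (ω c : ℝ)

theorem hasDerivAt_cosh_mul_sub (x : ℝ) :
    HasDerivAt (fun x => cosh (ω * (x - c))) (ω * sinh (ω * (x - c))) x := by
  simpa [mul_comm] using (((hasDerivAt_id x).sub_const c).const_mul ω).cosh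

theorem hasDerivAt_mul_sinh_mul_sub (x : ℝ) :
    HasDerivAt (fun x => ω * sinh (ω * (x - c))) (ω ^ 2 * cosh (ω * (x - c))) x := by
  simpa [mul_comm, sq, mul_assoc] using
    ((((hasDerivAt_id x).sub_const c).const_mul ω).sinh).const_mul ω

theorem deriv_cosh_mul_sub :
    deriv (fun x => cosh (ω * (x - c))) = fun x => ω * sinh (ω * (x - c)) :=
  funext fun x => (hasDerivAt_cosh_mul_sub ω c x).deriv

theorem deriv_deriv_cosh_mul_sub :
    deriv (deriv fun x => cosh (ω * (x - c))) = fun x => ω ^ 2 * cosh (ω * (x - c)) := by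
  rw [deriv_cosh_mul_sub]
  exact funext fun x => (hasDerivAt_mul_sinh_mul_sub ω c x).deriv

end CoshMode

/-- For λ > σ₁ = (e-1)/(e+1), the linearization at infinity has a positive eigenvalue. -/
theorem positive_eigenvalue_at_infinity (lam : ℝ)
    (hlam : (Real.exp 1 - 1) / (Real.exp 1 + 1) < lam) :
    ∃ μ : ℝ, 0 < μ ∧
      ∃ φ : ℝ → ℝ, (∃ x ∈ Set.Icc (0:ℝ) 1, φ x ≠ 0) ∧
        Differentiable ℝ φ ∧ Differentiable ℝ (deriv φ) ∧
        (∀ x ∈ Set.Icc (0:ℝ) 1, deriv (deriv φ) x = (1 + μ) * φ x) ∧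
        -(deriv φ 0) = lam * φ 0 ∧
        deriv φ 1 = lam * φ 1 := by
  obtain ⟨ω, hω1, hω⟩ := exists_one_lt_mul_tanh_half_eq (tanh_one_half ▸ hlam)
  have hbc : ω * sinh (ω / 2) = lam * cosh (ω / 2) := by
    rw [← hω, tanh_eq_sinh_div_cosh, mul_assoc, div_mul_cancel₀ _ (cosh_pos _).ne']
  refine ⟨ω ^ 2 - 1, by nlinarith, fun x => cosh (ω * (x - 1 / 2)),
    ⟨1 / 2, by norm_num, by simp⟩, fun x => (hasDerivAt_cosh_mul_sub ω _ x).differentiableAt,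
    ?_, fun x _ => ?_, ?_, ?_⟩
  · rw [deriv_cosh_mul_sub]
    exact fun x => (hasDerivAt_mul_sinh_mul_sub ω _ x).differentiableAt
  · rw [deriv_deriv_cosh_mul_sub]
    ring
  · simp only [deriv_cosh_mul_sub, show ω * (0 - 1 / 2) = -(ω / 2) by ring, sinh_neg, cosh_neg]
    linarith
  · simp only [deriv_cosh_mul_sub, show ω * (1 - 1 / 2) = ω / 2 by ring, hbc]
end

section
/- Let e denote Euler's number and σ₁* := −2/(1+e). Let g : ℝ → ℝ satisfy g(0) = 0 and |g(a) − g(b)| ≤ |a − b| for all a, b ∈ ℝ (g is 1-Lipschitz), and let λ < σ₁*. If u : ℝ → ℝ is twice differentiable with u''(x) = u(x) for all x ∈ [0,1], −u'(0) = λ·u(0) + g(u(0)), and u'(1) = λ·u(1) + g(u(1)), then u(x) = 0 for all x ∈ [0,1]. That is, for λ < σ₁* the trivial solution is the unique equilibrium. -/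
/-!
Since `u'' = u`, the functions `u ± u'` solve `f' = ±f`, so on `[0, 1]` the solution is
`u x = u 0 cosh x + u' 0 sinh x`. Feeding in the two boundary conditions gives
`u 1 = k u 0 - sinh 1 · g (u 0)` and symmetrically `u 0 = k u 1 - sinh 1 · g (u 1)` with
`k = cosh 1 - λ sinh 1`. As `|g y| ≤ |y|`, this forces `|u 1| ≥ c |u 0|` and `|u 0| ≥ c |u 1|`
for `c = cosh 1 - (λ + 1) sinh 1`, and `c > 1` is equivalent to `λ + 1 < tanh (1/2) = σ₁`.
Hence `u 0 = 0`, then `u' 0 = 0`, and `u` vanishes on `[0, 1]`.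
-/

open Real Set

theorem eq_exp_mul_of_hasDerivAt_mul {f : ℝ → ℝ} {c a b : ℝ}
    (hf : ∀ x ∈ Icc a b, HasDerivAt f (c * f x) x) :
    ∀ x ∈ Icc a b, f x = exp (c * (x - a)) * f a := by
  set F : ℝ → ℝ := fun x => exp (-(c * (x - a))) * f x
  have hF : ∀ x ∈ Icc a b, HasDerivAt F 0 x := by
    intro x hx
    have hexp : HasDerivAt (fun x => exp (-(c * (x - a)))) (exp (-(c * (x - a))) * -c) x := by
      simpa using (((hasDerivAt_id x).sub_const a).const_mul c).neg.exp
    have hprod : HasDerivAt F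
        (exp (-(c * (x - a))) * -c * f x + exp (-(c * (x - a))) * (c * f x)) x :=
      hexp.mul (hf x hx)
    rwa [show exp (-(c * (x - a))) * -c * f x + exp (-(c * (x - a))) * (c * f x) = 0 by ring]
      at hprod
  have hFcont : ContinuousOn F (Icc a b) := fun x hx => (hF x hx).continuousAt.continuousWithinAt
  intro x hx
  have hFx : F x = F a := constant_of_has_deriv_right_zero hFcont
    (fun y hy => (hF y (Ico_subset_Icc_self hy)).hasDerivWithinAt) x hx
  simp only [F, sub_self, mul_zero, neg_zero, exp_zero, one_mul] at hFx
  rw [← hFx, ← mul_assoc, ← exp_add, add_neg_cancel, exp_zero, one_mul]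

theorem eq_cosh_sinh_of_hasDerivAt {u u' : ℝ → ℝ} {a b : ℝ}
    (hu : ∀ x ∈ Icc a b, HasDerivAt u (u' x) x)
    (hu' : ∀ x ∈ Icc a b, HasDerivAt u' (u x) x) :
    ∀ x ∈ Icc a b, u x = u a * cosh (x - a) + u' a * sinh (x - a) ∧
      u' x = u a * sinh (x - a) + u' a * cosh (x - a) := by
  have hsum := eq_exp_mul_of_hasDerivAt_mul (f := fun x => u x + u' x) (c := 1)
    fun x hx => by rw [one_mul, add_comm (u x)]; exact (hu x hx).add (hu' x hx)
  have hdiff := eq_exp_mul_of_hasDerivAt_mul (f := fun x => u' x - u x) (c := -1)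
    fun x hx => by rw [neg_one_mul, neg_sub]; exact (hu' x hx).sub (hu x hx)
  intro x hx
  have h₁ := hsum x hx
  have h₂ := hdiff x hx
  simp only [one_mul, neg_one_mul] at h₁ h₂
  rw [cosh_eq, sinh_eq]
  constructor
  · linear_combination (h₁ - h₂) / 2
  · linear_combination (h₁ + h₂) / 2

theorem sub_mul_abs_le_abs_of_eq_mul_sub {g : ℝ → ℝ} {p q k s : ℝ} (hs : 0 ≤ s)
    (hg : |g p| ≤ |p|) (h : q = k * p - s * g p) : (k - s) * |p| ≤ |q| :=
  calc (k - s) * |p| ≤ |k * p| - |s * g p| := by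
        rw [abs_mul, abs_mul, abs_of_nonneg hs]
        nlinarith [le_abs_self k, abs_nonneg p]
    _ ≤ |q| := h ▸ abs_sub_abs_le_abs_sub _ _

theorem eq_zero_of_eq_mul_sub_of_eq_mul_sub {g : ℝ → ℝ} {p q k s : ℝ} (hs : 0 ≤ s)
    (hks : 1 < k - s) (hg : ∀ y, |g y| ≤ |y|)
    (hq : q = k * p - s * g p) (hp : p = k * q - s * g q) : p = 0 := by
  have hpq := sub_mul_abs_le_abs_of_eq_mul_sub hs (hg p) hq
  have hqp := sub_mul_abs_le_abs_of_eq_mul_sub hs (hg q) hp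
  exact abs_eq_zero.mp (by nlinarith [abs_nonneg p, abs_nonneg q])

theorem one_lt_cosh_one_sub_mul_sinh_one {lam : ℝ} (hlam : lam < -2 / (1 + exp 1)) :
    1 < cosh 1 - lam * sinh 1 - sinh 1 := by
  have he : 1 < exp 1 := one_lt_exp_iff.mpr one_pos
  have hlam' : lam * (1 + exp 1) < -2 := by
    rwa [lt_div_iff₀ (by positivity)] at hlam
  rw [cosh_eq, sinh_eq, exp_neg]
  have hinv : exp 1 * (exp 1)⁻¹ = 1 := mul_inv_cancel₀ (exp_pos 1).ne'
  nlinarith [inv_pos.mpr (exp_pos 1), mul_pos (sub_pos.mpr he) (inv_pos.mpr (exp_pos 1))]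

/-- For λ < σ₁* = -2/(1+e) and g a 1-Lipschitz nonlinearity with g(0) = 0,
the trivial solution is the only equilibrium. -/
theorem trivial_unique_equilibrium (g : ℝ → ℝ) (hg0 : g 0 = 0)
    (hglip : ∀ a b : ℝ, |g a - g b| ≤ |a - b|)
    (lam : ℝ) (hlam : lam < -2 / (1 + Real.exp 1))
    (u : ℝ → ℝ) (hu : Differentiable ℝ u) (hu' : Differentiable ℝ (deriv u))
    (hODE : ∀ x ∈ Set.Icc (0:ℝ) 1, deriv (deriv u) x = u x)
    (hbc0 : -(deriv u 0) = lam * u 0 + g (u 0))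
    (hbc1 : deriv u 1 = lam * u 1 + g (u 1)) :
    ∀ x ∈ Set.Icc (0:ℝ) 1, u x = 0 := by
  have hsol := eq_cosh_sinh_of_hasDerivAt (fun x _ => (hu x).hasDerivAt)
    fun x hx => hODE x hx ▸ (hu' x).hasDerivAt
  obtain ⟨hu1, hdu1⟩ := hsol 1 ⟨zero_le_one, le_rfl⟩
  rw [sub_zero] at hu1 hdu1
  have hg : ∀ y, |g y| ≤ |y| := fun y => by simpa [hg0] using hglip y 0
  have hu0 : u 0 = 0 :=
    eq_zero_of_eq_mul_sub_of_eq_mul_sub (q := u 1) (sinh_nonneg_iff.mpr zero_le_one)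
      (one_lt_cosh_one_sub_mul_sinh_one hlam) hg
      (by linear_combination hu1 - sinh 1 * hbc0)
      (by linear_combination sinh 1 * (hdu1 - hbc1) - cosh 1 * hu1 - u 0 * cosh_sq_sub_sinh_sq 1)
  have hdu0 : deriv u 0 = 0 := by rw [hu0, hg0] at hbc0; linarith
  intro x hx
  rw [(hsol x hx).1, hu0, hdu0]
  ring
end
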